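/- arXiv:1512.07580 — 6 statements merged into one kernel-verified Lean document; each statement's English description precedes it below -/
import Mathlib

section
/- In the simplex category Δ, every morphism a : [m] → [n] admits a factorisation a = f ∘ g with g generic and f free, and this factorisation is unique: if f ∘ g = f' ∘ g' with g, g' generic and f, f' free, then g and g' have the same codomain, g = g' and f = f'. -/
/-!
A free map `[k] → [n]` is a translation `j ↦ c + j`, so it is determined by its value at `0`
and is injective. Composing a generic `g` with a free `f` therefore gives `f 0 = a 0`,
`f 0 + k = a m` and `f (g i) = a 0 + g i = a i`: the intermediate object, the free map and
the generic map are all read off from `a`, and `[a m - a 0]` with `i ↦ a i - a 0` and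
`j ↦ a 0 + j` realises them.
-/

open CategoryTheory

namespace DS3

/-- A morphism of the simplex category is *generic* (endpoint-preserving) if it preserves
the bottom and the top element. -/
def IsGeneric {m n : SimplexCategory} (a : m ⟶ n) : Prop :=
  a.toOrderHom 0 = 0 ∧ a.toOrderHom (Fin.last m.len) = Fin.last n.len

/-- A morphism of the simplex category is *free* (distance-preserving) if
`a (i+1) = a i + 1` for all `0 ≤ i ≤ m-1`. -/
def IsFree {m n : SimplexCategory} (a : m ⟶ n) : Prop :=
  ∀ i : Fin m.len, (a.toOrderHom i.succ : ℕ) = (a.toOrderHom i.castSucc : ℕ) + 1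

open SimplexCategory

section Free

variable {k n : SimplexCategory}

lemma IsFree.apply_eq {f : k ⟶ n} (hf : IsFree f) (j : Fin (k.len + 1)) :
    (f.toOrderHom j : ℕ) = f.toOrderHom 0 + j := by
  induction j using Fin.induction with
  | zero => simp
  | succ i ih => rw [hf i, ih, Fin.val_succ, Fin.val_castSucc, Nat.add_assoc]

lemma IsFree.ext {f f' : k ⟶ n} (hf : IsFree f) (hf' : IsFree f')
    (h : f.toOrderHom 0 = f'.toOrderHom 0) : f = f' :=
  Hom.ext' _ _ <| OrderHom.ext _ _ <| funext fun j => Fin.ext <| by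
    rw [hf.apply_eq, hf'.apply_eq, h]

lemma IsFree.mono {f : k ⟶ n} (hf : IsFree f) : Mono f :=
  mono_iff_injective.mpr fun i j hij => Fin.ext <| by
    have := congrArg Fin.val hij
    rw [hf.apply_eq i, hf.apply_eq j] at this
    omega

def translate (c : ℕ) (h : c + k.len ≤ n.len) : k ⟶ n :=
  Hom.mk ⟨fun j => ⟨c + j, by omega⟩, fun _ _ hij => Nat.add_le_add_left hij c⟩

@[simp]
lemma translate_apply (c : ℕ) (h : c + k.len ≤ n.len) (j : Fin (k.len + 1)) :
    ((translate c h).toOrderHom j : ℕ) = c + j :=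
  rfl

lemma isFree_translate (c : ℕ) (h : c + k.len ≤ n.len) : IsFree (translate c h) :=
  fun i => by simp [Nat.add_assoc]

end Free

section Generic

variable {m k n : SimplexCategory}

lemma IsGeneric.comp_apply_zero {g : m ⟶ k} (hg : IsGeneric g) (f : k ⟶ n) :
    (g ≫ f).toOrderHom 0 = f.toOrderHom 0 :=
  congrArg f.toOrderHom hg.1

lemma IsGeneric.comp_apply_last {g : m ⟶ k} (hg : IsGeneric g) (f : k ⟶ n) :
    (g ≫ f).toOrderHom (Fin.last m.len) = f.toOrderHom (Fin.last k.len) :=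
  congrArg f.toOrderHom hg.2

lemma len_eq_of_isGeneric_of_isFree {g : m ⟶ k} {f : k ⟶ n} (hg : IsGeneric g)
    (hf : IsFree f) :
    k.len = ((g ≫ f).toOrderHom (Fin.last m.len) : ℕ) - (g ≫ f).toOrderHom 0 := by
  rw [hg.comp_apply_zero, hg.comp_apply_last, hf.apply_eq, Fin.val_last]
  omega

end Generic

section Factorisation

variable {m n : SimplexCategory} (a : m ⟶ n)

abbrev imageSpan : SimplexCategory :=
  mk ((a.toOrderHom (Fin.last m.len) : ℕ) - a.toOrderHom 0)

lemma apply_zero_le (i : Fin (m.len + 1)) : a.toOrderHom 0 ≤ a.toOrderHom i :=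
  a.toOrderHom.monotone (Fin.zero_le i)

lemma apply_le_apply_last (i : Fin (m.len + 1)) :
    a.toOrderHom i ≤ a.toOrderHom (Fin.last m.len) :=
  a.toOrderHom.monotone (Fin.le_last i)

def genericPart : m ⟶ imageSpan a :=
  Hom.mk ⟨fun i => ⟨a.toOrderHom i - a.toOrderHom 0,
      Nat.lt_succ_of_le (Nat.sub_le_sub_right (apply_le_apply_last a i) _)⟩,
    fun _ _ hij => Nat.sub_le_sub_right (a.toOrderHom.monotone hij) _⟩

@[simp]
lemma genericPart_apply (i : Fin (m.len + 1)) :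
    ((genericPart a).toOrderHom i : ℕ) = a.toOrderHom i - a.toOrderHom 0 :=
  rfl

def freePart : imageSpan a ⟶ n :=
  translate (a.toOrderHom 0) <| by
    change _ + (_ - _) ≤ _
    rw [Nat.add_sub_cancel' (apply_zero_le a _)]
    exact Nat.lt_succ_iff.mp (a.toOrderHom _).is_lt

lemma isGeneric_genericPart : IsGeneric (genericPart a) :=
  ⟨Fin.ext <| by simp, Fin.ext <| by simp⟩

lemma isFree_freePart : IsFree (freePart a) :=
  isFree_translate _ _

lemma freePart_apply_zero : (freePart a).toOrderHom 0 = a.toOrderHom 0 :=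
  Fin.ext <| by simp [freePart]

lemma genericPart_comp_freePart : genericPart a ≫ freePart a = a :=
  Hom.ext' _ _ <| OrderHom.ext _ _ <| funext fun i => Fin.ext <| by
    have := apply_zero_le a i
    simp only [comp_toOrderHom, OrderHom.comp_coe, Function.comp_apply, freePart,
      translate_apply, genericPart_apply]
    omega

end Factorisation

/-- Every morphism of `Δ` factors uniquely as a generic map followed by a free map. -/
theorem generic_free_factorisation_unique {m n : SimplexCategory} (a : m ⟶ n) :
    ∃ (k : SimplexCategory) (g : m ⟶ k) (f : k ⟶ n),
      IsGeneric g ∧ IsFree f ∧ g ≫ f = a ∧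
      ∀ (k' : SimplexCategory) (g' : m ⟶ k') (f' : k' ⟶ n),
        IsGeneric g' → IsFree f' → g' ≫ f' = a →
        k' = k ∧ HEq g' g ∧ HEq f' f := by
  refine ⟨imageSpan a, genericPart a, freePart a, isGeneric_genericPart a, isFree_freePart a,
    genericPart_comp_freePart a, ?_⟩
  rintro k' g' f' hg' hf' ha
  obtain rfl : k' = imageSpan a :=
    SimplexCategory.ext (ha ▸ len_eq_of_isGeneric_of_isFree hg' hf')
  have hf : f' = freePart a :=
    hf'.ext (isFree_freePart a) (by rw [freePart_apply_zero, ← hg'.comp_apply_zero, ha])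
  have hg : g' = genericPart a := by
    have := hf'.mono
    rw [← cancel_mono f', ha, hf, genericPart_comp_freePart]
  exact ⟨rfl, heq_of_eq hg, heq_of_eq hf⟩

end DS3
end

section
/- Generic and free maps in Δ admit pushouts along each other, and the resulting maps are again generic and free: for any generic map g : [m] → [n] and any free map f : [m] → [k] in Δ, the pushout of g along f exists in Δ, the induced map out of [k] is generic, and the induced map out of [n] is free. -/
/-!
STATEMENT 1: Generic and free maps in Δ admit pushouts along each other, and the
resulting maps are again generic and free.
-/

open CategoryTheory

namespace DS3

/-!
A free map `[m] → [k]` is the inclusion `i ↦ a + i` of an interval, so it is a composite of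
cofaces `δ 0` and `δ last`. Since pushout squares paste, it suffices to push a generic `g` out
along a single `δ 0`: the pushout is `[n + 1]`, with `g` extended by `0 ↦ 0`, and `g 0 = 0` is
what makes the induced map out of it monotone. The case of `δ last` is the mirror image of this
one under the order-reversing automorphism `SimplexCategory.rev` of `Δ`.
-/

open SimplexCategory Simplicial Limits

variable {m n k : SimplexCategory}

theorem isFree_iff {f : m ⟶ n} :
    IsFree f ↔ ∀ i, (f.toOrderHom i : ℕ) = f.toOrderHom 0 + i := by
  refine ⟨fun hf i => ?_, fun hf i => by simp [hf i.succ, hf i.castSucc, add_assoc]⟩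
  induction i using Fin.induction with
  | zero => simp
  | succ i ih => simp [hf i, ih, add_assoc]

theorem isFree_id : IsFree (𝟙 m) := fun _ => rfl

theorem isFree_δ_zero {n : ℕ} : IsFree (δ (0 : Fin (n + 2))) := fun i => by
  simp [δ]

theorem isFree_δ_last {n : ℕ} : IsFree (δ (Fin.last (n + 1))) := fun i => by
  simp [δ]

theorem IsFree.comp {f : m ⟶ n} {h : n ⟶ k} (hf : IsFree f) (hh : IsFree h) :
    IsFree (f ≫ h) := by
  rw [isFree_iff] at *
  intro i
  simp only [comp_toOrderHom, OrderHom.comp_coe, Function.comp_apply, hh (f.toOrderHom _), hf i]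
  omega

theorem IsFree.of_comp {f : m ⟶ n} {h : n ⟶ k} (hfh : IsFree (f ≫ h)) (hh : IsFree h) :
    IsFree f := by
  rw [isFree_iff] at *
  intro i
  have := hfh i
  simp only [comp_toOrderHom, OrderHom.comp_coe, Function.comp_apply, hh (f.toOrderHom _)] at this
  omega

theorem IsFree.eq_id {f : m ⟶ m} (hf : IsFree f) : f = 𝟙 m := by
  have hlast := isFree_iff.1 hf (Fin.last m.len)
  have := (f.toOrderHom (Fin.last m.len)).is_le
  ext i : 3
  simp only [Fin.val_last] at hlast
  simp only [id_toOrderHom, OrderHom.id_coe, id_eq]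
  rw [Fin.ext_iff, isFree_iff.1 hf i]
  omega

theorem IsFree.eq_of_isGeneric {f : m ⟶ k} (hf : IsFree f) (hfg : IsGeneric f) : m = k := by
  have := isFree_iff.1 hf (Fin.last m.len)
  rw [hfg.1, hfg.2] at this
  ext
  simpa using this.symm

theorem exists_eq_mk_succ_of_not_isGeneric {f : m ⟶ k} (hfg : ¬IsGeneric f) :
    ∃ k' : ℕ, k = ⦋k' + 1⦌ := by
  have hk : k.len ≠ 0 := fun hk => hfg
    ⟨Fin.ext (by have := (f.toOrderHom 0).is_le; simp; omega),
      Fin.ext (by have := (f.toOrderHom (Fin.last _)).is_le; simp; omega)⟩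
  obtain ⟨k', hk'⟩ := Nat.exists_eq_add_one_of_ne_zero hk
  exact ⟨k', SimplexCategory.ext hk'⟩

theorem IsFree.exists_eq_comp_δ_zero_or_δ_last {k : ℕ} {f : m ⟶ ⦋k + 1⦌} (hf : IsFree f)
    (hfg : ¬IsGeneric f) :
    ∃ f₁ : m ⟶ ⦋k⦌, IsFree f₁ ∧ (f = f₁ ≫ δ 0 ∨ f = f₁ ≫ δ (Fin.last _)) := by
  rcases not_and_or.1 hfg with h0 | hlast
  · obtain ⟨f₁, rfl⟩ := eq_comp_δ_of_not_surjective' f 0 fun x hx =>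
      h0 (nonpos_iff_eq_zero.1 (hx ▸ f.toOrderHom.monotone (Fin.zero_le x)))
    exact ⟨f₁, hf.of_comp isFree_δ_zero, .inl rfl⟩
  · obtain ⟨f₁, rfl⟩ := eq_comp_δ_of_not_surjective' f (Fin.last _) fun x hx =>
      hlast (Fin.last_le_iff.1 (hx ▸ f.toOrderHom.monotone (Fin.le_last x)))
    exact ⟨f₁, hf.of_comp isFree_δ_last, .inr rfl⟩

def consHom {n : ℕ} {X : SimplexCategory} (x : Fin (X.len + 1)) (h : ⦋n⦌ ⟶ X)
    (hx : x ≤ h.toOrderHom 0) : ⦋n + 1⦌ ⟶ X :=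
  Hom.mk ⟨Matrix.vecCons x h.toOrderHom, monotone_vecCons.2 ⟨hx, h.toOrderHom.monotone⟩⟩

section consHom

variable {n : ℕ} {X : SimplexCategory} {x : Fin (X.len + 1)} {h : ⦋n⦌ ⟶ X}
  {hx : x ≤ h.toOrderHom 0}

@[simp]
theorem consHom_zero : (consHom x h hx).toOrderHom 0 = x := rfl

@[simp]
theorem consHom_succ (j : Fin (n + 1)) : (consHom x h hx).toOrderHom j.succ = h.toOrderHom j :=
  rfl

@[simp]
theorem δ_zero_comp_consHom : δ 0 ≫ consHom x h hx = h := by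
  ext j : 3
  simp [δ]

theorem eq_consHom {l : ⦋n + 1⦌ ⟶ X} (h0 : l.toOrderHom 0 = x) (hsucc : δ 0 ≫ l = h) :
    l = consHom x h hx := by
  ext j : 3
  induction j using Fin.cases with
  | zero => simp [h0]
  | succ j => simp [← hsucc, δ]

end consHom

theorem isPushout_δ_zero {g : m ⟶ n} (hg : g.toOrderHom 0 = 0) :
    IsPushout g (δ 0) (δ 0) (consHom 0 (g ≫ δ 0) (Fin.zero_le _)) := by
  have hs (s : PushoutCocone g (δ 0)) (i : Fin (m.len + 1)) :
      s.inl.toOrderHom (g.toOrderHom i) = s.inr.toOrderHom i.succ := by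
    simpa [δ] using congr_toOrderHom_apply s.condition i
  have hdesc (s : PushoutCocone g (δ 0)) : s.inr.toOrderHom 0 ≤ s.inl.toOrderHom 0 := by
    calc s.inr.toOrderHom 0 ≤ s.inr.toOrderHom (0 : Fin (m.len + 1)).succ :=
          s.inr.toOrderHom.monotone (Fin.zero_le _)
      _ = s.inl.toOrderHom 0 := by rw [← hs, hg]
  refine IsPushout.of_isColimit (PushoutCocone.IsColimit.mk
    (inr := consHom 0 (g ≫ δ 0) (Fin.zero_le _)) δ_zero_comp_consHom.symm
    (fun s => consHom _ s.inl (hdesc s)) (fun s => δ_zero_comp_consHom) (fun s => ?_)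
    (fun s l hl hr => eq_consHom ?_ hl))
  · ext i : 3
    induction i using Fin.cases with
    | zero => simp
    | succ i => simp [δ, hs]
  · simpa using congr_toOrderHom_apply hr 0

variable {g : m ⟶ n}

theorem IsGeneric.consHom_δ_zero (hg : IsGeneric g) :
    IsGeneric (consHom 0 (g ≫ δ 0) (Fin.zero_le _)) := by
  refine ⟨rfl, ?_⟩
  rw [← Fin.succ_last, consHom_succ]
  simp [δ, hg.2]

theorem IsGeneric.rev_map (hg : IsGeneric g) : IsGeneric (rev.map g) := by
  constructor <;> simp [hg.1, hg.2]

theorem IsGeneric.exists_isPushout_δ_zero (hg : IsGeneric g) :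
    ∃ g' : ⦋m.len + 1⦌ ⟶ ⦋n.len + 1⦌, IsGeneric g' ∧ IsPushout g (δ 0) (δ 0) g' :=
  ⟨_, hg.consHom_δ_zero, isPushout_δ_zero hg.1⟩

theorem IsGeneric.exists_isPushout_δ_last (hg : IsGeneric g) :
    ∃ g' : ⦋m.len + 1⦌ ⟶ ⦋n.len + 1⦌,
      IsGeneric g' ∧ IsPushout g (δ (Fin.last _)) (δ (Fin.last _)) g' := by
  obtain ⟨g₀, hg₀, h⟩ := hg.rev_map.exists_isPushout_δ_zero
  refine ⟨rev.map g₀, hg₀.rev_map, IsPushout.of_map_of_faithful rev ?_⟩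
  simpa using h

/-- For a generic map `g : [m] → [n]` and a free map `f : [m] → [k]`, the pushout of `g`
along `f` exists in `Δ`; the induced map out of `[k]` is generic and the induced map out
of `[n]` is free. -/
theorem generic_free_pushout {m n k : SimplexCategory} (g : m ⟶ n) (f : m ⟶ k)
    (hg : IsGeneric g) (hf : IsFree f) :
    ∃ (p : SimplexCategory) (f' : n ⟶ p) (g' : k ⟶ p),
      IsFree f' ∧ IsGeneric g' ∧ IsPushout g f f' g' := by
  by_cases hfg : IsGeneric f
  · obtain rfl := hf.eq_of_isGeneric hfg
    obtain rfl := hf.eq_id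
    exact ⟨n, 𝟙 n, g, isFree_id, hg, IsPushout.id_vert g⟩
  obtain ⟨k, rfl⟩ := exists_eq_mk_succ_of_not_isGeneric hfg
  obtain ⟨f₁, hf₁, rfl | rfl⟩ := hf.exists_eq_comp_δ_zero_or_δ_last hfg
  all_goals
    obtain ⟨p, f', g', hf', hg', hpo⟩ := generic_free_pushout g f₁ hg hf₁
  · obtain ⟨g'', hg'', hpo'⟩ := hg'.exists_isPushout_δ_zero
    exact ⟨_, f' ≫ δ 0, g'', hf'.comp isFree_δ_zero, hg'', hpo.paste_vert hpo'⟩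
  · obtain ⟨g'', hg'', hpo'⟩ := hg'.exists_isPushout_δ_last
    exact ⟨_, f' ≫ δ _, g'', hf'.comp isFree_δ_last, hg'', hpo.paste_vert hpo'⟩
termination_by k.len

end DS3
end

section
/- Let (E,F) be a factorisation system on a category D, let D_{x/} denote the coslice category under an object x and D^E_{x/} its full subcategory spanned by the E-morphisms out of x, and let w : D_{x/} → D^E_{x/} denote the functor sending a morphism out of x to its E-factor. Then for any morphism e : x → x' belonging to E, the square formed by the precomposition functors e^! : D_{x'/} → D_{x/} and e^! : D^E_{x'/} → D^E_{x/} together with the functors w commutes up to natural isomorphism, and the induced functor from D_{x'/} to the pseudo-pullback of w : D_{x/} → D^E_{x/} along e^! : D^E_{x'/} → D^E_{x/} is an equivalence of categories. -/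
open CategoryTheory

namespace DS3

universe v u v₁ u₁ v₂ u₂ v₃ u₃ v₄ u₄

variable {D : Type u} [Category.{v} D]

structure FactorisationSystem (D : Type u) [Category.{v} D] where
  E : MorphismProperty D
  F : MorphismProperty D
  E_comp_iso : ∀ {X Y Z : D} (e : X ⟶ Y) (i : Y ⟶ Z), IsIso i → E e → E (e ≫ i)
  E_iso_comp : ∀ {X Y Z : D} (i : X ⟶ Y) (e : Y ⟶ Z), IsIso i → E e → E (i ≫ e)
  F_comp_iso : ∀ {X Y Z : D} (f : X ⟶ Y) (i : Y ⟶ Z), IsIso i → F f → F (f ≫ i)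
  F_iso_comp : ∀ {X Y Z : D} (i : X ⟶ Y) (f : Y ⟶ Z), IsIso i → F f → F (i ≫ f)
  orth : ∀ {A B X Y : D} (e : A ⟶ B) (f : X ⟶ Y), E e → F f →
    ∀ (u : A ⟶ X) (v : B ⟶ Y), u ≫ f = e ≫ v →
      ∃! d : B ⟶ X, e ≫ d = u ∧ d ≫ f = v
  fact : ∀ {X Y : D} (h : X ⟶ Y), ∃ (Z : D) (e : X ⟶ Z) (f : Z ⟶ Y), E e ∧ F f ∧ e ≫ f = h

/-- The left class of a factorisation system is closed under composition. -/
theorem FactorisationSystem.E_comp (fs : FactorisationSystem D) {X Y Z : D}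
    (e1 : X ⟶ Y) (e2 : Y ⟶ Z) (h1 : fs.E e1) (h2 : fs.E e2) : fs.E (e1 ≫ e2) := by
  obtain ⟨W, e, f, he, hf, hef⟩ := fs.fact (e1 ≫ e2)
  obtain ⟨d1, ⟨hd1a, hd1b⟩, -⟩ := fs.orth e1 f h1 hf e e2 (by rw [hef])
  obtain ⟨d2, ⟨hd2a, hd2b⟩, -⟩ := fs.orth e2 f h2 hf d1 (𝟙 Z)
    (by rw [hd1b, Category.comp_id])
  obtain ⟨d, hd, huniq⟩ := fs.orth e f he hf e f rfl
  have key1 : e ≫ (f ≫ d2) = e ∧ (f ≫ d2) ≫ f = f := by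
    constructor
    · rw [← Category.assoc, hef, Category.assoc, hd2a, hd1a]
    · rw [Category.assoc, hd2b, Category.comp_id]
  have key2 : e ≫ 𝟙 W = e ∧ 𝟙 W ≫ f = f := ⟨Category.comp_id e, Category.id_comp f⟩
  have hfd2 : f ≫ d2 = 𝟙 W := by rw [huniq _ key1, huniq _ key2]
  have hiso : IsIso f := ⟨d2, hfd2, hd2b⟩
  have := fs.E_comp_iso e f hiso he
  rwa [hef] at this

/-- The full subcategory `D^E_{x/}` of the coslice `D_{x/}` spanned by the `E`-morphisms
out of `x`. -/
abbrev UnderE (fs : FactorisationSystem D) (x : D) :=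
  ObjectProperty.FullSubcategory (fun a : Under x => fs.E a.hom)

/-- The inclusion `D^E_{x/} ↪ D_{x/}`. -/
abbrev inclUE (fs : FactorisationSystem D) (x : D) : UnderE fs x ⥤ Under x :=
  ObjectProperty.ι _

/-- Precomposition with an `E`-map `e : x ⟶ x'`, restricted to the `E`-coslices. -/
def precompE (fs : FactorisationSystem D) {x x' : D} (e : x ⟶ x') (he : fs.E e) :
    UnderE fs x' ⥤ UnderE fs x :=
  ObjectProperty.lift _ (ObjectProperty.ι _ ⋙ Under.map e)
    (fun a => by
      show fs.E (e ≫ a.obj.hom)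
      exact fs.E_comp e a.obj.hom he a.property)

/-- The pseudo-pullback (iso-comma category) of two functors. -/
abbrev PsPull {A : Type u₁} [Category.{v₁} A] {B : Type u₂} [Category.{v₂} B]
    {C : Type u₃} [Category.{v₃} C] (F : A ⥤ C) (G : B ⥤ C) :=
  ObjectProperty.FullSubcategory (fun z : Comma F G => IsIso z.hom)

/-- The functor into the pseudo-pullback induced by a square commuting up to natural
isomorphism. -/
def pbInduced {A : Type u₁} [Category.{v₁} A] {B : Type u₂} [Category.{v₂} B]
    {C : Type u₃} [Category.{v₃} C] {Z : Type u₄} [Category.{v₄} Z]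
    (F : A ⥤ C) (G : B ⥤ C) (H : Z ⥤ A) (K : Z ⥤ B)
    (η : H ⋙ F ≅ K ⋙ G) : Z ⥤ PsPull F G :=
  ObjectProperty.lift _
    { obj := fun z => { left := H.obj z, right := K.obj z, hom := η.hom.app z }
      map := fun {z z'} ζ =>
        { left := H.map ζ, right := K.map ζ, w := by simpa using η.hom.naturality ζ } }
    (fun z => by dsimp; infer_instance)


/-!
Write `ε`, `ε'` for the counits. For `a` under `x'`, both `w (e ≫ a)` and `e ≫ w' a` are
`E`-maps out of `x` through which `e ≫ a` factors with second factor in `F` (the latter because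
`E` is closed under composition). The mate of the strictly commuting square `ι ∘ e^! = e^! ∘ ι`
compares them, and it is invertible because, by orthogonality, a map `t : b ⟶ w c` from an
`E`-object is an isomorphism as soon as `t ≫ ε_c` has its underlying map in `F`. An object
`(c, b, φ : w c ≅ e^! b)` of the pseudo-pullback is the image of the object `b ≫ φ⁻¹ ≫ ε_c`
under `x'`, whose `E`-factor is `b` since `φ⁻¹ ≫ ε_c` lies in `F`. Fullness holds because a map
under `x'` can be rebuilt from its underlying map and its image under `w'`.
-/

theorem FactorisationSystem.diagonal_unique (fs : FactorisationSystem D) {A B X Y : D}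
    {e : A ⟶ B} {f : X ⟶ Y} (he : fs.E e) (hf : fs.F f) {u : A ⟶ X} {v : B ⟶ Y}
    {d₁ d₂ : B ⟶ X} (hu₁ : e ≫ d₁ = u) (hv₁ : d₁ ≫ f = v)
    (hu₂ : e ≫ d₂ = u) (hv₂ : d₂ ≫ f = v) : d₁ = d₂ :=
  (fs.orth e f he hf u v (by rw [← hu₁, ← hv₁, Category.assoc])).unique ⟨hu₁, hv₁⟩ ⟨hu₂, hv₂⟩

theorem hom_ext_of_counit_right {C : Type*} [Category C] {x : D} {L : C ⥤ Under x}
    {R : Under x ⥤ C} (adj : L ⊣ R) {c : C} {a : Under x} {f g : c ⟶ R.obj a}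
    (h : (L.map f ≫ adj.counit.app a).right = (L.map g ≫ adj.counit.app a).right) : f = g :=
  (adj.homEquiv c a).symm.injective <| by
    simpa only [Adjunction.homEquiv_counit] using Under.UnderMorphism.ext h

theorem map_homEquiv_comp_counit {C C' : Type*} [Category C] [Category C'] {L : C ⥤ C'}
    {R : C' ⥤ C} (adj : L ⊣ R) {c : C} {a : C'} (g : L.obj c ⟶ a) :
    L.map (adj.homEquiv c a g) ≫ adj.counit.app a = g := by
  simp [Adjunction.homEquiv_unit]

section Coreflection

variable {fs : FactorisationSystem D} {x : D} {w : Under x ⥤ UnderE fs x}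
  (adj : inclUE fs x ⊣ w)

theorem hom_comp_counit_right (a : Under x) :
    (w.obj a).obj.hom ≫ (adj.counit.app a).right = a.hom :=
  Under.w (adj.counit.app a)

theorem counit_right_naturality {a b : Under x} (f : a ⟶ b) :
    (w.map f).hom.right ≫ (adj.counit.app b).right = (adj.counit.app a).right ≫ f.right :=
  congrArg Under.Hom.right (adj.counit.naturality f)

theorem isIso_of_counit_right_mem_F {b : UnderE fs x} {a : Under x} (t : b ⟶ w.obj a)
    (ht : fs.F ((inclUE fs x).map t ≫ adj.counit.app a).right) : IsIso t := by
  set g := (inclUE fs x).map t ≫ adj.counit.app a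
  obtain ⟨d, ⟨hd₁, hd₂⟩, -⟩ := fs.orth (w.obj a).obj.hom g.right (w.obj a).property ht
    b.obj.hom (adj.counit.app a).right ((Under.w g).trans (hom_comp_counit_right adj a).symm)
  refine ⟨ObjectProperty.homMk (Under.homMk d hd₁), ?_, ?_⟩
  · refine ObjectProperty.hom_ext _ (Under.UnderMorphism.ext ?_)
    change t.hom.right ≫ d = 𝟙 _
    exact fs.diagonal_unique b.property ht (u := b.obj.hom) (v := g.right)
      (by rw [← Category.assoc, Under.w t.hom, hd₁]) (by rw [Category.assoc, hd₂]; rfl)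
      (Category.comp_id _) (Category.id_comp _)
  · exact hom_ext_of_counit_right adj (by simpa [g] using hd₂)

theorem exists_hom_of_counit_right_comp_eq {a b : Under x} (f : a.right ⟶ b.right)
    (r : w.obj a ⟶ w.obj b)
    (h : (adj.counit.app a).right ≫ f = r.hom.right ≫ (adj.counit.app b).right) :
    ∃ ζ : a ⟶ b, ζ.right = f ∧ w.map ζ = r := by
  have hf : a.hom ≫ f = b.hom := by
    rw [← hom_comp_counit_right adj a, Category.assoc, h, ← Category.assoc, Under.w r.hom,
      hom_comp_counit_right adj b]
  exact ⟨Under.homMk f hf, rfl,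
    hom_ext_of_counit_right adj ((counit_right_naturality adj _).trans h)⟩

theorem isIso_homEquiv_of_right_mem_F {b : UnderE fs x} {a : Under x}
    (g : (inclUE fs x).obj b ⟶ a) (hg : fs.F g.right) : IsIso (adj.homEquiv b a g) :=
  isIso_of_counit_right_mem_F adj _ ((congrArg (fun k => fs.F k.right)
    (map_homEquiv_comp_counit adj g)).mpr hg)

end Coreflection

section Precomposition

variable {fs : FactorisationSystem D} {x x' : D} (e : x ⟶ x') (he : fs.E e)
  {wx : Under x ⥤ UnderE fs x} (adjx : inclUE fs x ⊣ wx)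
  {wx' : Under x' ⥤ UnderE fs x'} (adjx' : inclUE fs x' ⊣ wx')

def precompESquare : TwoSquare (precompE fs e he) (inclUE fs x') (inclUE fs x) (Under.map e) :=
  (ObjectProperty.liftCompιIso _ _ _).hom

theorem precompESquare_app (b : UnderE fs x') : (precompESquare e he).app b = 𝟙 _ := rfl

def precompComparison : wx' ⋙ precompE fs e he ⟶ Under.map e ⋙ wx :=
  mateEquiv adjx' adjx (precompESquare e he)

theorem precompComparison_app_right_comp_counit_right (a : Under x') :
    ((precompComparison e he adjx adjx').app a).hom.right ≫
      (adjx.counit.app ((Under.map e).obj a)).right = (adjx'.counit.app a).right := by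
  have h := mateEquiv_counit adjx' adjx (precompESquare e he) a
  rw [precompESquare_app] at h
  exact congrArg Under.Hom.right (h.trans (Category.id_comp _))

theorem precompComparison_app_comp_map_right_comp_counit_right {a : Under x'} {c : Under x}
    (l : (Under.map e).obj a ⟶ c) :
    ((precompComparison e he adjx adjx').app a ≫ wx.map l).hom.right ≫
      (adjx.counit.app c).right = (adjx'.counit.app a).right ≫ l.right := by
  simp only [ObjectProperty.FullSubcategory.comp_hom, Under.comp_right, Category.assoc]
  rw [counit_right_naturality, ← Category.assoc,
    precompComparison_app_right_comp_counit_right]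
  rfl

theorem isIso_precompComparison (hwx' : ∀ a : Under x', fs.F (adjx'.counit.app a).right) :
    IsIso (precompComparison e he adjx adjx') := by
  have (a : Under x') : IsIso ((precompComparison e he adjx adjx').app a) :=
    isIso_of_counit_right_mem_F adjx _ <| by
      rw [Under.comp_right, ObjectProperty.ι_map, precompComparison_app_right_comp_counit_right]
      exact hwx' a
  exact NatIso.isIso_of_isIso_app _

noncomputable def precompCoreflectionIso
    (hwx' : ∀ a : Under x', fs.F (adjx'.counit.app a).right) :
    Under.map e ⋙ wx ≅ wx' ⋙ precompE fs e he :=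
  haveI := isIso_precompComparison e he adjx adjx' hwx'
  (asIso (precompComparison e he adjx adjx')).symm

theorem precompCoreflectionIso_inv_app
    (hwx' : ∀ a : Under x', fs.F (adjx'.counit.app a).right) (a : Under x') :
    (precompCoreflectionIso e he adjx adjx' hwx').inv.app a =
      (precompComparison e he adjx adjx').app a :=
  rfl

theorem counit_right_comp_eq_of_comm (hwx' : ∀ a : Under x', fs.F (adjx'.counit.app a).right)
    {a b : Under x'} (l : (Under.map e).obj a ⟶ (Under.map e).obj b) (r : wx'.obj a ⟶ wx'.obj b)
    (h : wx.map l ≫ (precompCoreflectionIso e he adjx adjx' hwx').hom.app b =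
      (precompCoreflectionIso e he adjx adjx' hwx').hom.app a ≫ (precompE fs e he).map r) :
    (adjx'.counit.app a).right ≫ l.right = r.hom.right ≫ (adjx'.counit.app b).right := by
  have h' : (precompComparison e he adjx adjx').app a ≫ wx.map l =
      (precompE fs e he).map r ≫ (precompComparison e he adjx adjx').app b := by
    rw [← precompCoreflectionIso_inv_app e he adjx adjx' hwx',
      ← precompCoreflectionIso_inv_app e he adjx adjx' hwx', ← Iso.app_inv, ← Iso.app_inv,
      Iso.inv_comp_eq, ← Category.assoc, Iso.eq_comp_inv]
    exact h
  refine (precompComparison_app_comp_map_right_comp_counit_right e he adjx adjx' l).symm.trans ?_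
  rw [h', ObjectProperty.FullSubcategory.comp_hom, Under.comp_right, Category.assoc,
    precompComparison_app_right_comp_counit_right]
  rfl

noncomputable abbrev precompPullbackFunctor
    (hwx' : ∀ a : Under x', fs.F (adjx'.counit.app a).right) :
    Under x' ⥤ PsPull wx (precompE fs e he) :=
  pbInduced wx (precompE fs e he) (Under.map e) wx' (precompCoreflectionIso e he adjx adjx' hwx')

theorem precompPullbackFunctor_faithful
    (hwx' : ∀ a : Under x', fs.F (adjx'.counit.app a).right) :
    (precompPullbackFunctor e he adjx adjx' hwx').Faithful where
  map_injective h := Under.UnderMorphism.ext (congrArg (fun g => g.hom.left.right) h)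

theorem precompPullbackFunctor_full (hwx' : ∀ a : Under x', fs.F (adjx'.counit.app a).right) :
    (precompPullbackFunctor e he adjx adjx' hwx').Full where
  map_surjective {a b} g := by
    obtain ⟨ζ, hζ, hwζ⟩ := exists_hom_of_counit_right_comp_eq adjx' g.hom.left.right g.hom.right
      (counit_right_comp_eq_of_comm e he adjx adjx' hwx' g.hom.left g.hom.right g.hom.w)
    exact ⟨ζ, ObjectProperty.hom_ext _ (Comma.hom_ext _ _ (Under.UnderMorphism.ext hζ) hwζ)⟩

theorem precompPullbackFunctor_essSurj (hwx : ∀ a : Under x, fs.F (adjx.counit.app a).right)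
    (hwx' : ∀ a : Under x', fs.F (adjx'.counit.app a).right) :
    (precompPullbackFunctor e he adjx adjx' hwx').EssSurj where
  mem_essImage Z := by
    obtain ⟨⟨c, b, φ⟩, hφ⟩ := Z
    have : IsIso φ := hφ
    set g := (inclUE fs x).map (inv φ) ≫ adjx.counit.app c
    have hg : fs.F g.right :=
      fs.F_iso_comp _ _ (Functor.map_isIso (inclUE fs x ⋙ Under.forget x) (inv φ)) (hwx c)
    let a' : Under x' := Under.mk (b.obj.hom ≫ g.right)
    let t : b ⟶ wx'.obj a' := adjx'.homEquiv _ _ (Under.homMk g.right)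
    have := isIso_homEquiv_of_right_mem_F adjx'
      (Under.homMk g.right : (inclUE fs x').obj b ⟶ a') hg
    let l : (Under.map e).obj a' ≅ c := Under.isoMk (Iso.refl _)
      ((Category.comp_id _).trans ((Category.assoc _ _ _).symm.trans (Under.w g)))
    have hinv : (precompE fs e he).map t ≫ (precompComparison e he adjx adjx').app a' ≫
        wx.map l.hom = inv φ := by
      refine hom_ext_of_counit_right adjx ((Category.assoc _ _ _).trans ?_)
      rw [precompComparison_app_comp_map_right_comp_counit_right]
      exact (congrArg _ (Category.comp_id _)).trans
        (congrArg Under.Hom.right (map_homEquiv_comp_counit adjx' _))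
    refine ⟨a', ⟨ObjectProperty.isoMk _ (Comma.isoMk l (asIso t).symm ?_)⟩⟩
    change wx.map l.hom ≫ φ =
      ((precompCoreflectionIso e he adjx adjx' hwx').app a').hom ≫ (precompE fs e he).map (inv t)
    rw [← Iso.inv_comp_eq, Iso.app_inv, precompCoreflectionIso_inv_app, Functor.map_inv]
    refine IsIso.eq_inv_of_hom_inv_id ?_
    rw [← Category.assoc, ← Category.assoc, Category.assoc _ _ (wx.map l.hom), hinv,
      IsIso.inv_hom_id]

end Precomposition

/-- Lemma 2.6 ("Lemma `lem:Dx'Dx`"): for an `E`-map `e : x ⟶ x'`, the square formed by the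
precomposition functors `e^!` and the `E`-factor coreflections `w` commutes up to natural
isomorphism, and the induced functor from `D_{x'/}` to the pseudo-pullback is an
equivalence.  Here "`w` is the `E`-factor functor" is expressed by saying that `w` is right
adjoint to the inclusion and the counit components are squares whose underlying morphism
lies in `F`. -/
theorem coslice_coreflection_pullback (fs : FactorisationSystem D) {x x' : D}
    (e : x ⟶ x') (he : fs.E e)
    (wx : Under x ⥤ UnderE fs x) (adjx : inclUE fs x ⊣ wx)
    (hwx : ∀ a : Under x, fs.F (CommaMorphism.right (adjx.counit.app a)))
    (wx' : Under x' ⥤ UnderE fs x') (adjx' : inclUE fs x' ⊣ wx')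
    (hwx' : ∀ a : Under x', fs.F (CommaMorphism.right (adjx'.counit.app a))) :
    ∃ η : Under.map e ⋙ wx ≅ wx' ⋙ precompE fs e he,
      (pbInduced wx (precompE fs e he) (Under.map e) wx' η).IsEquivalence :=
  ⟨precompCoreflectionIso e he adjx adjx' hwx',
    { faithful := precompPullbackFunctor_faithful e he adjx adjx' hwx'
      full := precompPullbackFunctor_full e he adjx adjx' hwx'
      essSurj := precompPullbackFunctor_essSurj e he adjx adjx' hwx hwx' }⟩

end DS3
end

section
/- Let L : D ⇄ C : R be an adjunction with counit ε, and let (E,F) be a factorisation system on D such that the endofunctor RL sends morphisms of F to morphisms of F, and R(ε_X) belongs to F for every object X of C. Let D̃ ⊆ C be the full subcategory spanned by objects isomorphic to L(A) for A in D, let Ẽ be the class of morphisms of D̃ isomorphic in the arrow category of C to a morphism L(e) with e ∈ E, and let F̃ be the class of morphisms f of D̃ with R(f) ∈ F. Then (Ẽ, F̃) is a factorisation system on D̃. -/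
/-!
A lifting problem in `C` from `L e` to `f` transposes along the adjunction to one in `D` from
`e` to `R f`, and the transposition is a bijection on diagonals; since orthogonality is
invariant under isomorphism of arrows and `D̃` is full, this gives `Ẽ ⊥ F̃`. For the
factorisation of `g : X ⟶ Y` with `X ≅ L A`, factor the transpose `A ⟶ R Y` of `g` as `e ≫ f`
in `D`; then `g ≅ L e ≫ (L f ≫ ε_Y)` and `R (L f ≫ ε_Y) = RL f ≫ R ε_Y` lies in `F`, which
is closed under composition.
-/

open CategoryTheory

namespace DS3

universe v u v₂ u₂

variable {D : Type u} [Category.{v} D]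

variable {C : Type u₂} [Category.{v₂} C]

/-- The full subcategory `D̃ ⊆ C` spanned by the objects isomorphic to `L A` for `A` in
`D`. -/
abbrev TildeD (L : D ⥤ C) := ObjectProperty.FullSubcategory (fun X : C => ∃ A : D, Nonempty (L.obj A ≅ X))

/-- The class `Ẽ` of morphisms of `D̃` isomorphic, in the arrow category of `C`, to
a morphism `L e` with `e ∈ E`. -/
def tildeE (L : D ⥤ C) (fs : FactorisationSystem D) : MorphismProperty (TildeD L) :=
  fun {X Y} g =>
    ∃ (A B : D) (e : A ⟶ B), fs.E e ∧
      Nonempty (Arrow.mk (L.map e) ≅ Arrow.mk g.hom)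

/-- The class `F̃` of morphisms `f` of `D̃` with `R f ∈ F`. -/
def tildeF (L : D ⥤ C) (R : C ⥤ D) (fs : FactorisationSystem D) :
    MorphismProperty (TildeD L) :=
  fun {X Y} g => fs.F (R.map g.hom)

def Orthogonal {A B X Y : C} (e : A ⟶ B) (f : X ⟶ Y) : Prop :=
  ∀ (u : A ⟶ X) (v : B ⟶ Y), u ≫ f = e ≫ v → ∃! d : B ⟶ X, e ≫ d = u ∧ d ≫ f = v

lemma Orthogonal.of_arrowIso {A B A' B' X Y : C} {e : A ⟶ B} {e' : A' ⟶ B'} {f : X ⟶ Y}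
    (h : Orthogonal e f) (φ : Arrow.mk e ≅ Arrow.mk e') : Orthogonal e' f := by
  intro u v sq
  have hφ : φ.hom.left ≫ e' = e ≫ φ.hom.right := φ.hom.w
  have sq' : (φ.hom.left ≫ u) ≫ f = e ≫ φ.hom.right ≫ v := by
    rw [Category.assoc, sq, ← Category.assoc, hφ, Category.assoc]
  refine (((asIso φ.hom.right).symm.homCongr (Iso.refl X)).existsUnique_congr
    fun d => ?_).mpr (h _ _ sq')
  simp only [Iso.homCongr_apply, Iso.symm_inv, asIso_hom, Iso.refl_hom, Category.comp_id,
    Category.assoc]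
  rw [← reassoc_of% hφ, cancel_epi, cancel_epi]

lemma Orthogonal.map_left_iff {L : D ⥤ C} {R : C ⥤ D} (adj : L ⊣ R) {A B : D} {X Y : C}
    (e : A ⟶ B) (f : X ⟶ Y) : Orthogonal (L.map e) f ↔ Orthogonal e (R.map f) := by
  refine (adj.homEquiv A X).forall_congr fun u => (adj.homEquiv B Y).forall_congr fun v => ?_
  refine imp_congr ?_ ((adj.homEquiv B X).existsUnique_congr fun d => and_congr ?_ ?_) <;>
  simp only [← adj.homEquiv_naturality_left, ← adj.homEquiv_naturality_right,
    Equiv.apply_eq_iff_eq]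

lemma Orthogonal.map_iff {G : D ⥤ C} (hG : G.FullyFaithful)
    {A B X Y : D} (e : A ⟶ B) (f : X ⟶ Y) : Orthogonal (G.map e) (G.map f) ↔ Orthogonal e f := by
  have := hG.faithful
  refine (hG.homEquiv.forall_congr fun u => hG.homEquiv.forall_congr fun v => ?_).symm
  refine imp_congr ?_ (hG.homEquiv.existsUnique_congr fun d => and_congr ?_ ?_) <;>
  simp only [Functor.FullyFaithful.homEquiv_apply, ← G.map_comp, G.map_injective_iff]

namespace FactorisationSystem

def ofRespectsIso (E F : MorphismProperty C) [E.RespectsIso] [F.RespectsIso]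
    (orth : ∀ {A B X Y : C} (e : A ⟶ B) (f : X ⟶ Y), E e → F f → Orthogonal e f)
    (fact : ∀ {X Y : C} (h : X ⟶ Y), ∃ (Z : C) (e : X ⟶ Z) (f : Z ⟶ Y), E e ∧ F f ∧ e ≫ f = h) :
    FactorisationSystem C where
  E := E
  F := F
  E_comp_iso e i _ := MorphismProperty.RespectsIso.postcomp E i e
  E_iso_comp i e _ := MorphismProperty.RespectsIso.precomp E i e
  F_comp_iso f i _ := MorphismProperty.RespectsIso.postcomp F i f
  F_iso_comp i f _ := MorphismProperty.RespectsIso.precomp F i f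
  orth := orth
  fact := fact

variable (fs : FactorisationSystem D)

instance respectsIso_F : fs.F.RespectsIso :=
  .mk _ (fun i f => fs.F_iso_comp i.hom f inferInstance)
    (fun i f => fs.F_comp_iso f i.hom inferInstance)

lemma eq_id_of_fac {X Y Z : D} {e : X ⟶ Y} {k : Y ⟶ Z} (he : fs.E e) (hk : fs.F k) {d : Y ⟶ Y}
    (h₁ : e ≫ d = e) (h₂ : d ≫ k = k) : d = 𝟙 Y :=
  (fs.orth e k he hk e k rfl).unique ⟨h₁, h₂⟩ ⟨Category.comp_id e, Category.id_comp k⟩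

lemma F_comp {X Y Z : D} {f : X ⟶ Y} {g : Y ⟶ Z} (hf : fs.F f) (hg : fs.F g) :
    fs.F (f ≫ g) := by
  obtain ⟨M, e, k, he, hk, hek⟩ := fs.fact (f ≫ g)
  obtain ⟨d, ⟨hd, hdg⟩, -⟩ := fs.orth e g he hg f k hek.symm
  -- `r` is a retraction of `e`, and `r ≫ e` fixes the factorisation `e ≫ k`, so `e` is iso.
  obtain ⟨r, ⟨hr, hrf⟩, -⟩ := fs.orth e f he hf (𝟙 X) d (by rw [Category.id_comp, hd])
  have : IsIso e := ⟨r, hr, fs.eq_id_of_fac he hk (by rw [reassoc_of% hr])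
    (by rw [Category.assoc, hek, reassoc_of% hrf, hdg])⟩
  rw [← hek]
  exact MorphismProperty.RespectsIso.precomp _ e k hk

end FactorisationSystem

section

variable {L : D ⥤ C} {R : C ⥤ D}

lemma tildeE_eq (fs : FactorisationSystem D) :
    tildeE L fs = (fs.E.map L).inverseImage (ObjectProperty.ι _) := by
  ext X Y g
  simp only [tildeE, MorphismProperty.map, MorphismProperty.inverseImage_iff, exists_prop,
    ObjectProperty.ι_map]

lemma tildeF_eq (fs : FactorisationSystem D) :
    tildeF L R fs = fs.F.inverseImage (ObjectProperty.ι _ ⋙ R) :=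
  rfl

instance (fs : FactorisationSystem D) : (tildeE L fs).RespectsIso := by
  rw [tildeE_eq]
  infer_instance

instance (fs : FactorisationSystem D) : (tildeF L R fs).RespectsIso := by
  rw [tildeF_eq]
  infer_instance

lemma orthogonal_of_tildeE_of_tildeF (adj : L ⊣ R) (fs : FactorisationSystem D)
    {P Q X Y : TildeD L} {e : P ⟶ Q} {f : X ⟶ Y} (he : tildeE L fs e) (hf : tildeF L R fs f) :
    Orthogonal e f := by
  obtain ⟨A, B, e₀, he₀, ⟨φ⟩⟩ := he
  refine (Orthogonal.map_iff (ObjectProperty.fullyFaithfulι _) e f).mp ?_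
  exact ((Orthogonal.map_left_iff adj e₀ f.hom).mpr (fs.orth e₀ _ he₀ hf)).of_arrowIso φ

lemma exists_fac_of_adjunction (adj : L ⊣ R) (fs : FactorisationSystem D)
    (hRL : ∀ {X Y : D} (f : X ⟶ Y), fs.F f → fs.F (R.map (L.map f)))
    (hcounit : ∀ X : C, fs.F (R.map (adj.counit.app X))) {A : D} {Y : C} (h : L.obj A ⟶ Y) :
    ∃ (Z : D) (e : A ⟶ Z) (f : L.obj Z ⟶ Y), fs.E e ∧ fs.F (R.map f) ∧ L.map e ≫ f = h := by
  obtain ⟨Z, e, f, he, hf, hef⟩ := fs.fact (adj.homEquiv A Y h)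
  refine ⟨Z, e, L.map f ≫ adj.counit.app Y, he, ?_, ?_⟩
  · rw [R.map_comp]
    exact fs.F_comp (hRL f hf) (hcounit Y)
  · rw [← L.map_comp_assoc, hef, ← Adjunction.homEquiv_counit, Equiv.symm_apply_apply]

lemma exists_tildeE_comp_tildeF (adj : L ⊣ R) (fs : FactorisationSystem D)
    (hRL : ∀ {X Y : D} (f : X ⟶ Y), fs.F f → fs.F (R.map (L.map f)))
    (hcounit : ∀ X : C, fs.F (R.map (adj.counit.app X))) {X Y : TildeD L} (g : X ⟶ Y) :
    ∃ (Z : TildeD L) (e : X ⟶ Z) (f : Z ⟶ Y), tildeE L fs e ∧ tildeF L R fs f ∧ e ≫ f = g := by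
  obtain ⟨A, ⟨α⟩⟩ := X.property
  obtain ⟨Z, e, f, he, hf, hef⟩ := exists_fac_of_adjunction adj fs hRL hcounit (α.hom ≫ g.hom)
  refine ⟨⟨L.obj Z, Z, ⟨Iso.refl _⟩⟩, ObjectProperty.homMk (α.inv ≫ L.map e),
    ObjectProperty.homMk f, ⟨A, Z, e, he, ⟨Arrow.isoMk α (Iso.refl _)⟩⟩, hf, ?_⟩
  ext
  simp [hef]

end

/-- Lifting a factorisation system along an adjunction `L ⊣ R`: if `RL` preserves `F` and
`R ε_X ∈ F` for all `X`, then `(Ẽ, F̃)` is a factorisation system on `D̃`. -/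
theorem factorisationSystem_lift (L : D ⥤ C) (R : C ⥤ D) (adj : L ⊣ R)
    (fs : FactorisationSystem D)
    (hRL : ∀ {X Y : D} (f : X ⟶ Y), fs.F f → fs.F (R.map (L.map f)))
    (hcounit : ∀ X : C, fs.F (R.map (adj.counit.app X))) :
    ∃ fs' : FactorisationSystem (TildeD L),
      fs'.E = tildeE L fs ∧ fs'.F = tildeF L R fs :=
  ⟨.ofRespectsIso _ _ (fun _ _ => orthogonal_of_tildeE_of_tildeF adj fs)
    (exists_tildeE_comp_tildeF adj fs hRL hcounit), rfl, rfl⟩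

end DS3
end

section
/- Let D be a category with a terminal object 1 and C a category with pullbacks. Then the evaluation functor ev_1 : Fun(D,C) → C is a Grothendieck fibration whose cartesian morphisms are precisely the cartesian natural transformations (those all of whose naturality squares are pullbacks). Consequently, the class of natural transformations whose component at 1 is an isomorphism, together with the class of cartesian natural transformations, form a factorisation system on Fun(D,C). -/
/-! For `f : c ⟶ G.obj T` the functor `d ↦ G d ×_{G T} c`, the pullback in `D ⥤ C` of the cocone
`G ⟶ const (G T)` along `const f`, maps to `G` by a cartesian natural transformation lying over `f`
up to an isomorphism. A cartesian natural transformation `α : F ⟶ G` is cartesian over `ev_T`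
because every `F d` is the pullback `G d ×_{G T} F T`. Conversely, a cartesian arrow `α` factors
through the lift of `α.app T` by a map that is invertible at `T`, hence invertible, since both
arrows are cartesian. The same factorisation, applied to an arbitrary `φ`, is the required one, and
orthogonality is the general fact that cartesian arrows are uniquely right orthogonal to the
morphisms the functor inverts. -/

open CategoryTheory CategoryTheory.Limits

namespace DS3

universe v u v' u' v₂ u₂

/-- A morphism `ψ : c' ⟶ c` is *cartesian* with respect to a functor `p`. -/
def IsCartesianArrow {C : Type u'} [Category.{v'} C] {D' : Type u₂} [Category.{v₂} D']
    (p : C ⥤ D') {c' c : C} (ψ : c' ⟶ c) : Prop :=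
  ∀ (c'' : C) (χ : c'' ⟶ c) (g : p.obj c'' ⟶ p.obj c'),
    g ≫ p.map ψ = p.map χ →
    ∃! θ : c'' ⟶ c', θ ≫ ψ = χ ∧ p.map θ = g

/-- A functor `p : C ⥤ D` is a *Grothendieck fibration* if every morphism of `D` with
codomain in the image of `p` admits a cartesian lift. -/
def IsGrothendieckFibration {C : Type u'} [Category.{v'} C] {D' : Type u₂}
    [Category.{v₂} D'] (p : C ⥤ D') : Prop :=
  ∀ (c : C) (d : D') (f : d ⟶ p.obj c),
    ∃ (c' : C) (ψ : c' ⟶ c) (i : p.obj c' ≅ d),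
      i.hom ≫ f = p.map ψ ∧ IsCartesianArrow p ψ

/-- A natural transformation is *cartesian* if all of its naturality squares are
pullbacks. -/
def IsCartesianNT {D : Type u} [Category.{v} D] {C : Type u₂} [Category.{v₂} C]
    {F G : D ⥤ C} (α : F ⟶ G) : Prop :=
  ∀ ⦃d d' : D⦄ (g : d ⟶ d'),
    IsPullback (α.app d) (F.map g) (G.map g) (α.app d')

def FactorisationSystem.ofRespectsIso_s9 {𝒜 : Type u} [Category.{v} 𝒜] (E F : MorphismProperty 𝒜)
    [E.RespectsIso] [F.RespectsIso]
    (orth : ∀ {A B X Y : 𝒜} (e : A ⟶ B) (f : X ⟶ Y), E e → F f →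
      ∀ (u : A ⟶ X) (v : B ⟶ Y), u ≫ f = e ≫ v → ∃! d : B ⟶ X, e ≫ d = u ∧ d ≫ f = v)
    (fact : ∀ {X Y : 𝒜} (h : X ⟶ Y), ∃ (Z : 𝒜) (e : X ⟶ Z) (f : Z ⟶ Y), E e ∧ F f ∧ e ≫ f = h) :
    FactorisationSystem 𝒜 where
  E := E
  F := F
  E_comp_iso e i _ := MorphismProperty.RespectsIso.postcomp E i e
  E_iso_comp i e _ := MorphismProperty.RespectsIso.precomp E i e
  F_comp_iso f i _ := MorphismProperty.RespectsIso.postcomp F i f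
  F_iso_comp i f _ := MorphismProperty.RespectsIso.precomp F i f
  orth := orth
  fact := fact

namespace IsCartesianArrow

variable {𝒳 : Type u'} [Category.{v'} 𝒳] {𝒮 : Type u₂} [Category.{v₂} 𝒮] {p : 𝒳 ⥤ 𝒮}
  {c' c : 𝒳} {ψ : c' ⟶ c}

theorem hom_ext (hψ : IsCartesianArrow p ψ) {c'' : 𝒳} {θ₁ θ₂ : c'' ⟶ c'}
    (h : θ₁ ≫ ψ = θ₂ ≫ ψ) (h' : p.map θ₁ = p.map θ₂) : θ₁ = θ₂ :=
  (hψ c'' (θ₂ ≫ ψ) (p.map θ₂) (p.map_comp _ _).symm).unique ⟨h, h'⟩ ⟨rfl, rfl⟩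

theorem existsUnique_diagonal (hψ : IsCartesianArrow p ψ) {a b : 𝒳} (e : a ⟶ b)
    [IsIso (p.map e)] (u : a ⟶ c') (v : b ⟶ c) (w : u ≫ ψ = e ≫ v) :
    ∃! d : b ⟶ c', e ≫ d = u ∧ d ≫ ψ = v := by
  obtain ⟨d, ⟨hdψ, hdp⟩, hd_unique⟩ := hψ b v (inv (p.map e) ≫ p.map u) (by
    rw [Category.assoc, ← p.map_comp, w, p.map_comp, IsIso.inv_hom_id_assoc])
  refine ⟨d, ⟨hψ.hom_ext (by rw [Category.assoc, hdψ, w]) ?_, hdψ⟩, ?_⟩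
  · rw [p.map_comp, hdp, IsIso.hom_inv_id_assoc]
  · rintro d' ⟨hed', hd'ψ⟩
    refine hd_unique d' ⟨hd'ψ, ?_⟩
    rw [← hed', p.map_comp, IsIso.inv_hom_id_assoc]

theorem isIso_of_comp (hψ : IsCartesianArrow p ψ) {c'' : 𝒳} {θ : c'' ⟶ c'}
    (hθψ : IsCartesianArrow p (θ ≫ ψ)) [IsIso (p.map θ)] : IsIso θ := by
  obtain ⟨d, ⟨hθd, hdθψ⟩, -⟩ := hθψ.existsUnique_diagonal θ (𝟙 _) ψ (Category.id_comp _)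
  have hpd : p.map d = inv (p.map θ) :=
    IsIso.eq_inv_of_hom_inv_id (by rw [← p.map_comp, hθd, p.map_id])
  refine ⟨d, hθd, hψ.hom_ext (by rw [Category.assoc, hdθψ, Category.id_comp]) ?_⟩
  rw [p.map_comp, hpd, IsIso.inv_hom_id, p.map_id]

end IsCartesianArrow

theorem isCartesianNT_iff_equifibered {D : Type u} [Category.{v} D] {C : Type u₂}
    [Category.{v₂} C] {F G : D ⥤ C} (α : F ⟶ G) : IsCartesianNT α ↔ NatTrans.Equifibered α :=
  ⟨fun h _ _ g => (h g).flip, fun h _ _ g => (h g).flip⟩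

section Evaluation

variable {D : Type u} [Category.{v} D] {C : Type u₂} [Category.{v₂} C] {T : D}
  (hT : IsTerminal T)

namespace IsCartesianNT

variable {F G H : D ⥤ C} {α : F ⟶ G}

include hT in
theorem hom_ext (hα : IsCartesianNT α) {θ₁ θ₂ : H ⟶ F} (h : θ₁ ≫ α = θ₂ ≫ α)
    (hT' : θ₁.app T = θ₂.app T) : θ₁ = θ₂ := by
  ext b
  apply (hα (hT.from b)).hom_ext
  · exact congr_app h b
  · rw [← θ₁.naturality, ← θ₂.naturality, hT']

include hT in
theorem isCartesianArrow (hα : IsCartesianNT α) :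
    IsCartesianArrow ((evaluation D C).obj T) α := by
  intro H χ g hg
  simp only [evaluation_obj_map] at hg ⊢
  have w (b : D) : χ.app b ≫ G.map (hT.from b) = (H.map (hT.from b) ≫ g) ≫ α.app T := by
    rw [Category.assoc, hg, χ.naturality]
  let θ : H ⟶ F :=
    { app b := (hα (hT.from b)).lift _ _ (w b)
      naturality b b' m := (hα (hT.from b')).hom_ext
        (by simp only [Category.assoc, IsPullback.lift_fst, α.naturality, IsPullback.lift_fst_assoc,
          χ.naturality])
        (by simp [← H.map_comp_assoc, ← F.map_comp]) }
  have hθα : θ ≫ α = χ := by ext b; exact IsPullback.lift_fst ..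
  have hθT : θ.app T = g := by simpa [θ] using (hα (hT.from T)).lift_snd _ _ (w T)
  exact ⟨θ, ⟨hθα, hθT⟩, fun θ' h => hα.hom_ext hT (h.1.trans hθα.symm) (h.2.trans hθT.symm)⟩

end IsCartesianNT

variable [HasPullbacks C] (G : D ⥤ C) {c : C} (f : c ⟶ G.obj T)

noncomputable def cartesianLift : D ⥤ C :=
  pullback (coconeOfDiagramTerminal hT G).ι ((Functor.const D).map f)

noncomputable def cartesianLiftπ : cartesianLift hT G f ⟶ G := pullback.fst _ _

noncomputable def cartesianLiftSnd : cartesianLift hT G f ⟶ (Functor.const D).obj c :=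
  pullback.snd _ _

theorem isPullback_cartesianLift_app (d : D) :
    IsPullback ((cartesianLiftπ hT G f).app d) ((cartesianLiftSnd hT G f).app d)
      (G.map (hT.from d)) f :=
  (IsPullback.of_hasPullback _ _).map ((evaluation D C).obj d)

theorem isCartesianNT_cartesianLiftπ : IsCartesianNT (cartesianLiftπ hT G f) := by
  intro d d' g
  refine IsPullback.of_bot ?_ ((cartesianLiftπ hT G f).naturality g).symm
    (isPullback_cartesianLift_app hT G f d')
  rw [(cartesianLiftSnd hT G f).naturality, ← G.map_comp, hT.comp_from]
  simpa using isPullback_cartesianLift_app hT G f d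

instance isIso_cartesianLiftSnd_app_terminal : IsIso ((cartesianLiftSnd hT G f).app T) :=
  (isPullback_cartesianLift_app hT G f T).isIso_snd_of_isIso
    (by rw [hT.from_self, G.map_id]; infer_instance)

theorem cartesianLiftSnd_app_terminal_comp :
    (cartesianLiftSnd hT G f).app T ≫ f = (cartesianLiftπ hT G f).app T := by
  rw [← (isPullback_cartesianLift_app hT G f T).w, hT.from_self, G.map_id, Category.comp_id]

variable {G} {F : D ⥤ C} (α : F ⟶ G)

noncomputable def toCartesianLift : F ⟶ cartesianLift hT G (α.app T) :=
  pullback.lift α (coconeOfDiagramTerminal hT F).ι (by ext d; exact (α.naturality _).symm)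

theorem toCartesianLift_comp_π : toCartesianLift hT α ≫ cartesianLiftπ hT G (α.app T) = α :=
  pullback.lift_fst ..

theorem toCartesianLift_comp_snd :
    toCartesianLift hT α ≫ cartesianLiftSnd hT G (α.app T) = (coconeOfDiagramTerminal hT F).ι :=
  pullback.lift_snd ..

instance isIso_toCartesianLift_app_terminal : IsIso ((toCartesianLift hT α).app T) := by
  have h : (toCartesianLift hT α).app T ≫ (cartesianLiftSnd hT G (α.app T)).app T = 𝟙 _ := by
    rw [← NatTrans.comp_app, toCartesianLift_comp_snd]
    exact (F.congr_map hT.from_self).trans (F.map_id T)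
  rw [IsIso.eq_inv_of_inv_hom_id h]
  infer_instance

include hT in
variable {α} in
theorem IsCartesianArrow.isCartesianNT (hα : IsCartesianArrow ((evaluation D C).obj T) α) :
    IsCartesianNT α := by
  have hπ := isCartesianNT_cartesianLiftπ hT G (α.app T)
  have : IsIso (((evaluation D C).obj T).map (toCartesianLift hT α)) :=
    isIso_toCartesianLift_app_terminal hT α
  have : IsIso (toCartesianLift hT α) :=
    (hπ.isCartesianArrow hT).isIso_of_comp (by rwa [toCartesianLift_comp_π])
  rw [← toCartesianLift_comp_π hT α, isCartesianNT_iff_equifibered]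
  exact MorphismProperty.RespectsIso.precomp _ _ _ ((isCartesianNT_iff_equifibered _).1 hπ)

end Evaluation

/-- For `D` a category with a terminal object `1` and `C` a category with pullbacks, the
evaluation functor `ev₁ : Fun(D,C) ⥤ C` is a Grothendieck fibration, whose cartesian
morphisms are exactly the cartesian natural transformations; consequently the natural
transformations whose component at `1` is invertible, together with the cartesian natural
transformations, form a factorisation system on `Fun(D,C)`. -/
theorem evaluation_fibration_factorisation
    {D : Type u} [Category.{v} D] {C : Type u₂} [Category.{v₂} C]
    [HasPullbacks C] (T : D) (hT : IsTerminal T) :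
    IsGrothendieckFibration ((evaluation D C).obj T) ∧
    (∀ {F G : D ⥤ C} (α : F ⟶ G),
      IsCartesianArrow ((evaluation D C).obj T) α ↔ IsCartesianNT α) ∧
    (∃ fs : FactorisationSystem (D ⥤ C),
      (∀ {F G : D ⥤ C} (α : F ⟶ G), fs.E α ↔ IsIso (α.app T)) ∧
      (∀ {F G : D ⥤ C} (α : F ⟶ G), fs.F α ↔ IsCartesianNT α)) := by
  refine ⟨fun G c f => ⟨cartesianLift hT G f, cartesianLiftπ hT G f,
      asIso ((cartesianLiftSnd hT G f).app T), cartesianLiftSnd_app_terminal_comp hT G f,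
      (isCartesianNT_cartesianLiftπ hT G f).isCartesianArrow hT⟩,
    fun α => ⟨fun h => h.isCartesianNT hT, fun h => h.isCartesianArrow hT⟩, ?_⟩
  refine ⟨.ofRespectsIso ((MorphismProperty.isomorphisms C).inverseImage ((evaluation D C).obj T))
      NatTrans.Equifibered (fun e f he hf u v w => ?_) (fun φ => ?_),
    fun α => Iff.rfl, fun α => (isCartesianNT_iff_equifibered α).symm⟩
  · have : IsIso (((evaluation D C).obj T).map e) := he
    exact (((isCartesianNT_iff_equifibered f).2 hf).isCartesianArrow hT).existsUnique_diagonal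
      e u v w
  · exact ⟨_, toCartesianLift hT φ, cartesianLiftπ hT _ _, isIso_toCartesianLift_app_terminal hT φ,
      (isCartesianNT_iff_equifibered _).1 (isCartesianNT_cartesianLiftπ hT _ _),
      toCartesianLift_comp_π hT φ⟩

end DS3
end

section
/- Let A be a flanked presheaf on Ξ, with face maps d_i : A_n → A_{n−1} (0 ≤ i ≤ n, together with the extra outer face map A_0 → A_{−1}) and degeneracy maps s_j : A_{n−1} → A_n (−1 ≤ j ≤ n, where s_{−1} = s_{⊥−1} and s_n may also be followed by s_{⊤+1} among the outer degeneracies). Then for all n ≥ 0 the following squares are pullbacks of sets: (i) for 0 ≤ i ≤ n, the square with top edge d_i : A_n → A_{n−1}, bottom edge d_{i+1} : A_{n+1} → A_n and both vertical edges s_{⊥−1}; (ii) for −1 ≤ j ≤ n, the square with top edge s_j : A_{n−1} → A_n, bottom edge s_{j+1} : A_n → A_{n+1} and both vertical edges s_{⊥−1}; (iii) for 0 ≤ i ≤ n, the square with top edge d_i : A_n → A_{n−1}, bottom edge d_i : A_{n+1} → A_n and both vertical edges s_{⊤+1}; (iv) for −1 ≤ j ≤ n, the square with top edge s_j : A_{n−1}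 → A_n, bottom edge s_j : A_n → A_{n+1} and both vertical edges s_{⊤+1}. -/
open CategoryTheory Opposite

namespace DS3

/-- A simplicial set is a *decomposition space* if it sends every pushout in `Δ` of a
generic map along a free map to a pullback of sets. -/
def IsDecomposition (X : SimplexCategoryᵒᵖ ⥤ Type) : Prop :=
  ∀ {a b c d : SimplexCategory} (g : a ⟶ b) (f : a ⟶ c) (f' : b ⟶ d) (g' : c ⟶ d),
    IsGeneric g → IsFree f → IsPushout g f f' g' →
    IsPullback (X.map f'.op) (X.map g'.op) (X.map g.op) (X.map f.op)

/-- A simplicial map is *cULF* if its naturality squares at all generic maps are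
pullbacks. -/
def IsCULF {Y X : SimplexCategoryᵒᵖ ⥤ Type} (α : Y ⟶ X) : Prop :=
  ∀ {m n : SimplexCategory} (g : m ⟶ n), IsGeneric g →
    IsPullback (α.app (op n)) (Y.map g.op) (X.map g.op) (α.app (op m))

/-! ## The category Ξ of finite strict intervals -/

/-- Objects of the category `Ξ` of finite strict intervals: `⟨t⟩` stands for the finite
linear order `Fin (t+2)` with (distinct) bottom element `0` and top element `t+1`.
In the indexing of the paper, `⟨t⟩` is the object `[t-1]`; thus `⟨0⟩ = [-1]`. -/
@[ext] structure IntervalCat : Type where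
  /-- the number of non-endpoint elements -/
  len : ℕ

namespace IntervalCat

/-- Morphisms of `Ξ`: order-preserving maps preserving the bottom and the top element. -/
@[ext] structure Hom (a b : IntervalCat) : Type where
  toOrderHom : Fin (a.len + 2) →o Fin (b.len + 2)
  map_bot : toOrderHom 0 = 0
  map_top : toOrderHom (Fin.last (a.len + 1)) = Fin.last (b.len + 1)

instance : Category IntervalCat where
  Hom := Hom
  id a := ⟨OrderHom.id, rfl, rfl⟩
  comp f g := ⟨g.toOrderHom.comp f.toOrderHom,
    by simp [f.map_bot, g.map_bot], by simp [f.map_top, g.map_top]⟩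
  id_comp f := Hom.ext rfl
  comp_id f := Hom.ext rfl
  assoc f g h := Hom.ext rfl

end IntervalCat

/-- The coface map `⟨t⟩ ⟶ ⟨t+1⟩` of `Ξ` skipping the non-endpoint element `i+1`
(for `i ≤ t`; out of this range the index is clamped).  Under a presheaf `A` on `Ξ` it
induces the face map `d_i : A_n → A_{n-1}` (paper indexing `n = t-1`); for `t = i = 0` it is
the extra outer coface `[-1] → [0]`, inducing `A_0 → A_{-1}`. -/
def xiFace (t i : ℕ) : IntervalCat.mk t ⟶ IntervalCat.mk (t + 1) where
  toOrderHom :=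
    { toFun := fun x =>
        ⟨if (x : ℕ) < min (i + 1) (t + 1) then (x : ℕ) else (x : ℕ) + 1, by
          have := x.isLt
          dsimp only at this ⊢
          split <;> omega⟩
      monotone' := by
        intro x y hxy
        have hxy' : (x : ℕ) ≤ (y : ℕ) := hxy
        simp only [Fin.mk_le_mk]
        split <;> split <;> omega }
  map_bot := by
    apply Fin.ext
    simp only [OrderHom.coe_mk, Fin.val_zero]
    first | (split_ifs <;> omega) | simp
  map_top := by
    apply Fin.ext
    simp only [OrderHom.coe_mk, Fin.val_last]
    split <;> omega

/-- The codegeneracy map `⟨t+1⟩ ⟶ ⟨t⟩` of `Ξ` collapsing the pair `(j, j+1)` onto `j`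
(for `j ≤ t+1`; out of this range the index is clamped).  For `j = 0` this is the extra
bottom codegeneracy (inducing `s_{⊥-1} : A_n → A_{n+1}`, paper indexing `n = t-1`), for
`j = t+1` the extra top codegeneracy (inducing `s_{⊤+1}`), and for `1 ≤ j ≤ t` the ordinary
codegeneracy `σ_{j-1}` (inducing `s_{j-1}`). -/
def xiSigma (t j : ℕ) : IntervalCat.mk (t + 1) ⟶ IntervalCat.mk t where
  toOrderHom :=
    { toFun := fun x =>
        ⟨if (x : ℕ) ≤ min j (t + 1) then (x : ℕ) else (x : ℕ) - 1, by
          have := x.isLt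
          dsimp only at this ⊢
          split <;> omega⟩
      monotone' := by
        intro x y hxy
        have hxy' : (x : ℕ) ≤ (y : ℕ) := hxy
        simp only [Fin.mk_le_mk]
        split <;> split <;> omega }
  map_bot := by
    apply Fin.ext
    simp only [OrderHom.coe_mk, Fin.val_zero]
    first | (split_ifs <;> omega) | simp
  map_top := by
    apply Fin.ext
    simp only [OrderHom.coe_mk, Fin.val_last]
    split <;> omega

/-! ## The functors `u : Ξ ⥤ Δ` and `i : Δ ⥤ Ξ` -/

/-- The forgetful functor `u : Ξ ⥤ Δ`, forgetting that the endpoints are distinguished: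
`u ⟨t⟩ = [t+1]`. -/
def uF : IntervalCat ⥤ SimplexCategory where
  obj a := SimplexCategory.mk (a.len + 1)
  map f := SimplexCategory.mkHom f.toOrderHom
  map_id _ := rfl
  map_comp _ _ := rfl

/-- The underlying map of `i f`: extend `f` by a new bottom and a new top element. -/
def iObjMap {m n : ℕ} (f : Fin (m + 1) →o Fin (n + 1)) : Fin (m + 3) →o Fin (n + 3) where
  toFun x :=
    if (x : ℕ) = 0 then 0
    else if h : m + 2 ≤ (x : ℕ) then Fin.last (n + 2)
    else ⟨(f ⟨(x : ℕ) - 1, by omega⟩ : ℕ) + 1, by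
      have := (f ⟨(x : ℕ) - 1, by omega⟩).isLt; omega⟩
  monotone' := by
    intro x y hxy
    have hxy' : (x : ℕ) ≤ (y : ℕ) := hxy
    dsimp only
    by_cases h1 : (x : ℕ) = 0
    · simp only [if_pos h1]
      exact Fin.zero_le _
    · rw [if_neg h1]
      have hy1 : ¬ (y : ℕ) = 0 := by omega
      rw [if_neg hy1]
      by_cases h2 : m + 2 ≤ (x : ℕ)
      · rw [dif_pos h2, dif_pos (by omega : m + 2 ≤ (y : ℕ))]
      · rw [dif_neg h2]
        by_cases h3 : m + 2 ≤ (y : ℕ)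
        · rw [dif_pos h3]
          exact Fin.le_last _
        · rw [dif_neg h3]
          simp only [Fin.mk_le_mk]
          have : (⟨(x : ℕ) - 1, by omega⟩ : Fin (m + 1)) ≤ ⟨(y : ℕ) - 1, by omega⟩ := by
            simp only [Fin.mk_le_mk]; omega
          exact Nat.add_le_add_right (f.monotone this) 1

theorem iObjMap_bot {m n : ℕ} (f : Fin (m + 1) →o Fin (n + 1)) : iObjMap f 0 = 0 := by
  simp [iObjMap]

theorem iObjMap_top {m n : ℕ} (f : Fin (m + 1) →o Fin (n + 1)) :
    iObjMap f (Fin.last (m + 2)) = Fin.last (n + 2) := by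
  simp [iObjMap]

theorem iObjMap_id (m : ℕ) :
    iObjMap (OrderHom.id : Fin (m + 1) →o Fin (m + 1)) = OrderHom.id := by
  apply OrderHom.ext
  funext j
  apply Fin.ext
  have hj := j.isLt
  simp only [iObjMap, OrderHom.coe_mk, OrderHom.id_coe, id_eq]
  split_ifs with h1 h2 <;> simp <;> omega

theorem iObjMap_comp {m p n : ℕ} (f : Fin (m + 1) →o Fin (p + 1))
    (g : Fin (p + 1) →o Fin (n + 1)) :
    iObjMap (g.comp f) = (iObjMap g).comp (iObjMap f) := by
  apply OrderHom.ext
  funext j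
  apply Fin.ext
  have hj := j.isLt
  have key : ∀ {a b : ℕ} (F : Fin (a + 1) →o Fin (b + 1)) (x : Fin (a + 3))
      (hx0 : (x : ℕ) ≠ 0) (hx : ¬ a + 2 ≤ (x : ℕ)),
      ((iObjMap F x : Fin (b + 3)) : ℕ) = (F ⟨(x : ℕ) - 1, by omega⟩ : ℕ) + 1 := by
    intro a b F x hx0 hx
    first
      | (show ((if (x : ℕ) = 0 then (0 : Fin (b + 3))
            else if h : a + 2 ≤ (x : ℕ) then Fin.last (b + 2)
            else ⟨(F ⟨(x : ℕ) - 1, by omega⟩ : ℕ) + 1, by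
              have := (F ⟨(x : ℕ) - 1, by omega⟩).isLt; omega⟩ : Fin (b + 3)) : ℕ) = _
         rw [if_neg hx0, dif_neg hx])
      | simp [iObjMap, hx0, hx]
  change _ = ((iObjMap g (iObjMap f j) : Fin (n + 3)) : ℕ)
  by_cases h1 : (j : ℕ) = 0
  · have : j = 0 := Fin.ext h1
    subst this
    simp only [iObjMap_bot]
  · by_cases h2 : m + 2 ≤ (j : ℕ)
    · have : j = Fin.last (m + 2) := Fin.ext (by simp only [Fin.val_last]; omega)
      subst this
      simp only [iObjMap_top]
    · have hb := (f ⟨(j : ℕ) - 1, by omega⟩).isLt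
      have e : iObjMap f j = ⟨(f ⟨(j : ℕ) - 1, by omega⟩ : ℕ) + 1, by omega⟩ :=
        Fin.ext (key f j h1 h2)
      rw [key (g.comp f) j h1 h2, e,
        key g _ (by simp only [Fin.val_mk]; omega) (by simp only [Fin.val_mk]; omega)]
      simp

/-- The functor `i : Δ ⥤ Ξ` adjoining a new bottom and a new top element:
`i [n] = ⟨n+1⟩`. -/
def iF : SimplexCategory ⥤ IntervalCat where
  obj x := ⟨x.len + 1⟩
  map f := ⟨iObjMap f.toOrderHom, iObjMap_bot _, iObjMap_top _⟩
  map_id x := IntervalCat.Hom.ext (iObjMap_id x.len)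
  map_comp f g := IntervalCat.Hom.ext (iObjMap_comp f.toOrderHom g.toOrderHom)

/-! ## Presheaves on Ξ -/

/-- Restriction of a simplicial set along `u` (the functor `u*`). -/
def uStar (X : SimplexCategoryᵒᵖ ⥤ Type) : IntervalCatᵒᵖ ⥤ Type := uF.op ⋙ X

/-- Restriction of a presheaf on `Ξ` along `i` (the functor `i*`, taking underlying
simplicial sets). -/
def iStar (A : IntervalCatᵒᵖ ⥤ Type) : SimplexCategoryᵒᵖ ⥤ Type := iF.op ⋙ A

/-- A map of presheaves on `Ξ` is *cartesian* if all its naturality squares are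
pullbacks. -/
def IsCartesianXi {A B : IntervalCatᵒᵖ ⥤ Type} (α : A ⟶ B) : Prop :=
  ∀ ⦃c c' : IntervalCatᵒᵖ⦄ (φ : c ⟶ c'),
    IsPullback (α.app c) (A.map φ) (B.map φ) (α.app c')

/-- A presheaf `A` on `Ξ` is *flanked* if the extra outer degeneracy maps form cartesian
squares with the opposite outer face maps: for all `n ≥ 0` the squares

`A_{n-1} ←d⊤− A_n`         `A_{n-1} ←d⊥− A_n`
`  s⊥↓        ↓s⊥`   and   `  s⊤↓        ↓s⊤`
`A_n  ←d⊤−  A_{n+1}`       `A_n  ←d⊥−  A_{n+1}`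

are pullbacks (where `A_n := A(⟨n+1⟩)` in paper degree indexing, `d⊤` is the top face map,
`d⊥` the bottom face map, and for `n = 0` both are the extra outer face map
`A_0 → A_{-1}`). -/
def Flanked (A : IntervalCatᵒᵖ ⥤ Type) : Prop :=
  ∀ n : ℕ,
    IsPullback (A.map (xiFace n n).op) (A.map (xiSigma (n + 1) 0).op)
      (A.map (xiSigma n 0).op) (A.map (xiFace (n + 1) (n + 1)).op) ∧
    IsPullback (A.map (xiFace n 0).op) (A.map (xiSigma (n + 1) (n + 2)).op)
      (A.map (xiSigma n (n + 1)).op) (A.map (xiFace (n + 1) 0).op)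

/-! Since `s_{⊥-1}` has the retraction `d_⊥`, every square in question has injective vertical
maps, so it is a pullback as soon as its bottom map reflects membership in the image of
`s_{⊥-1}`.  Iterating the flanking pullbacks shows that a simplex lies in the image of `s_{⊥-1}`
exactly when its first vertex does, and the bottom maps of (i) and (ii) preserve first vertices.
Dually, (iii) and (iv) follow from the same argument for `s_{⊤+1}` and last vertices. -/

open Limits Function

universe u

lemma isPullback_of_injective_of_preimage_range_subset {P X Y Z : Type u} {t : P ⟶ X}
    {l : P ⟶ Y} {r : X ⟶ Z} {b : Y ⟶ Z} (w : t ≫ r = l ≫ b) (hl : Injective l)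
    (hr : Injective r) (hrange : b ⁻¹' Set.range r ⊆ Set.range l) : IsPullback t l r b := by
  refine (Types.isPullback_iff t r l b).2 ⟨w, fun _ _ h => ?_, fun x y hxy => ?_⟩
  · exact hl h.2
  · obtain ⟨p, rfl⟩ := hrange ⟨x, hxy⟩
    refine ⟨p, hr ?_, rfl⟩
    rw [hxy, ← types_comp_apply t r, w, types_comp_apply]

lemma map_op_injective_of_comp_eq_id {C : Type*} [Category C] (A : Cᵒᵖ ⥤ Type*) {a b : C}
    {d : a ⟶ b} {s : b ⟶ a} (h : d ≫ s = 𝟙 a) : Injective (A.map s.op) :=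
  LeftInverse.injective (g := A.map d.op) fun x => by
    rw [← Functor.map_comp_apply, ← op_comp, h, op_id, Functor.map_id_apply]

namespace IntervalCat

@[ext]
lemma hom_ext {a b : IntervalCat} {f g : a ⟶ b}
    (h : ∀ x, (f.toOrderHom x : ℕ) = g.toOrderHom x) : f = g :=
  Hom.ext (OrderHom.ext _ _ (funext fun x => Fin.ext (h x)))

@[simp]
lemma comp_toOrderHom_apply {a b c : IntervalCat} (f : a ⟶ b) (g : b ⟶ c)
    (x : Fin (a.len + 2)) :
    (f ≫ g).toOrderHom x = g.toOrderHom (f.toOrderHom x) := rfl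

@[simp]
lemma id_toOrderHom_apply (a : IntervalCat) (x : Fin (a.len + 2)) :
    (𝟙 a : a ⟶ a).toOrderHom x = x := rfl

end IntervalCat

@[simp]
lemma xiFace_apply (t i : ℕ) (x : Fin (t + 2)) :
    ((xiFace t i).toOrderHom x : ℕ) =
      if (x : ℕ) < min (i + 1) (t + 1) then (x : ℕ) else (x : ℕ) + 1 :=
  rfl

@[simp]
lemma xiSigma_apply (t j : ℕ) (x : Fin (t + 3)) :
    ((xiSigma t j).toOrderHom x : ℕ) =
      if (x : ℕ) ≤ min j (t + 1) then (x : ℕ) else (x : ℕ) - 1 :=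
  rfl

lemma xiFace_zero_comp_xiSigma_zero (m : ℕ) : xiFace m 0 ≫ xiSigma m 0 = 𝟙 _ := by
  ext x
  have := x.isLt
  simp only [IntervalCat.comp_toOrderHom_apply, IntervalCat.id_toOrderHom_apply, xiFace_apply,
    xiSigma_apply]
  split_ifs <;> omega

lemma xiFace_last_comp_xiSigma_last (m : ℕ) : xiFace m m ≫ xiSigma m (m + 1) = 𝟙 _ := by
  ext x
  have := x.isLt
  simp only [IntervalCat.comp_toOrderHom_apply, IntervalCat.id_toOrderHom_apply, xiFace_apply,
    xiSigma_apply]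
  split_ifs <;> omega

lemma xiSigma_zero_comp_xiFace {n i : ℕ} :
    xiSigma n 0 ≫ xiFace n i = xiFace (n + 1) (i + 1) ≫ xiSigma (n + 1) 0 := by
  ext x
  have := x.isLt
  simp only [IntervalCat.comp_toOrderHom_apply, xiFace_apply, xiSigma_apply]
  split_ifs <;> omega

lemma xiSigma_zero_comp_xiSigma {n jj : ℕ} :
    xiSigma (n + 1) 0 ≫ xiSigma n jj = xiSigma (n + 1) (jj + 1) ≫ xiSigma n 0 := by
  ext x
  have := x.isLt
  simp only [IntervalCat.comp_toOrderHom_apply, xiSigma_apply]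
  split_ifs <;> omega

lemma xiSigma_last_comp_xiFace {n i : ℕ} (hi : i ≤ n) :
    xiSigma n (n + 1) ≫ xiFace n i = xiFace (n + 1) i ≫ xiSigma (n + 1) (n + 2) := by
  ext x
  have := x.isLt
  simp only [IntervalCat.comp_toOrderHom_apply, xiFace_apply, xiSigma_apply]
  split_ifs <;> omega

lemma xiSigma_last_comp_xiSigma {n jj : ℕ} :
    xiSigma (n + 1) (n + 2) ≫ xiSigma n jj = xiSigma (n + 1) jj ≫ xiSigma n (n + 1) := by
  ext x
  have := x.isLt
  simp only [IntervalCat.comp_toOrderHom_apply, xiSigma_apply]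
  split_ifs <;> omega

/-- `⟨1⟩` is the simplex `[0]`, so `A.map (firstVertex m).op : A_m → A_0` takes a simplex to
its vertex `0`. -/
def firstVertex : (m : ℕ) → (IntervalCat.mk 1 ⟶ IntervalCat.mk (m + 1))
  | 0 => 𝟙 _
  | m + 1 => firstVertex m ≫ xiFace (m + 1) (m + 1)

def lastVertex : (m : ℕ) → (IntervalCat.mk 1 ⟶ IntervalCat.mk (m + 1))
  | 0 => 𝟙 _
  | m + 1 => lastVertex m ≫ xiFace (m + 1) 0

lemma firstVertex_apply (m : ℕ) (x : Fin 3) :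
    ((firstVertex m).toOrderHom x : ℕ) = if (x : ℕ) ≤ 1 then (x : ℕ) else m + 2 := by
  induction m with
  | zero =>
    have := x.isLt
    simp only [firstVertex, IntervalCat.id_toOrderHom_apply]
    split_ifs <;> omega
  | succ m ih =>
    simp only [firstVertex, IntervalCat.comp_toOrderHom_apply, xiFace_apply, ih]
    split_ifs <;> omega

lemma lastVertex_apply (m : ℕ) (x : Fin 3) :
    ((lastVertex m).toOrderHom x : ℕ) = if (x : ℕ) = 0 then 0 else (x : ℕ) + m := by
  induction m with
  | zero =>
    simp only [lastVertex, IntervalCat.id_toOrderHom_apply]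
    split_ifs <;> omega
  | succ m ih =>
    simp only [lastVertex, IntervalCat.comp_toOrderHom_apply, xiFace_apply, ih]
    split_ifs <;> omega

lemma firstVertex_comp_xiFace {n i : ℕ} :
    firstVertex n ≫ xiFace (n + 1) (i + 1) = firstVertex (n + 1) := by
  ext x
  simp only [firstVertex, IntervalCat.comp_toOrderHom_apply, xiFace_apply, firstVertex_apply]
  split_ifs <;> omega

lemma firstVertex_comp_xiSigma {n jj : ℕ} :
    firstVertex (n + 1) ≫ xiSigma (n + 1) (jj + 1) = firstVertex n := by
  ext x
  have := x.isLt
  simp only [IntervalCat.comp_toOrderHom_apply, xiSigma_apply, firstVertex_apply]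
  split_ifs <;> omega

lemma lastVertex_comp_xiFace {n i : ℕ} (hi : i ≤ n) :
    lastVertex n ≫ xiFace (n + 1) i = lastVertex (n + 1) := by
  ext x
  have := x.isLt
  simp only [lastVertex, IntervalCat.comp_toOrderHom_apply, xiFace_apply, lastVertex_apply]
  split_ifs <;> omega

lemma lastVertex_comp_xiSigma {n jj : ℕ} (hjj : jj ≤ n + 1) :
    lastVertex (n + 1) ≫ xiSigma (n + 1) jj = lastVertex n := by
  ext x
  have := x.isLt
  simp only [IntervalCat.comp_toOrderHom_apply, xiSigma_apply, lastVertex_apply]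
  split_ifs <;> omega

section Flanked

variable (A : IntervalCatᵒᵖ ⥤ Type) (hA : Flanked A)
include hA

lemma range_map_xiSigma_zero (m : ℕ) :
    Set.range (A.map (xiSigma m 0).op) =
      A.map (firstVertex m).op ⁻¹' Set.range (A.map (xiSigma 0 0).op) := by
  induction m with
  | zero => rw [firstVertex, op_id, A.map_id]; rfl
  | succ m ih =>
    rw [Types.range_snd_of_isPullback (hA m).1, ih, firstVertex, op_comp, A.map_comp]
    rfl

lemma range_map_xiSigma_last (m : ℕ) :
    Set.range (A.map (xiSigma m (m + 1)).op) =
      A.map (lastVertex m).op ⁻¹' Set.range (A.map (xiSigma 0 1).op) := by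
  induction m with
  | zero => rw [lastVertex, op_id, A.map_id]; rfl
  | succ m ih =>
    rw [Types.range_snd_of_isPullback (hA m).2, ih, lastVertex, op_comp, A.map_comp]
    rfl

lemma isPullback_of_firstVertex_comp {m k : ℕ} {ψ : IntervalCat.mk m ⟶ IntervalCat.mk k}
    {φ : IntervalCat.mk (m + 1) ⟶ IntervalCat.mk (k + 1)}
    (w : xiSigma m 0 ≫ ψ = φ ≫ xiSigma k 0) (hφ : firstVertex m ≫ φ = firstVertex k) :
    IsPullback (A.map ψ.op) (A.map (xiSigma k 0).op) (A.map (xiSigma m 0).op) (A.map φ.op) := by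
  refine isPullback_of_injective_of_preimage_range_subset ?_
    (map_op_injective_of_comp_eq_id A (xiFace_zero_comp_xiSigma_zero k))
    (map_op_injective_of_comp_eq_id A (xiFace_zero_comp_xiSigma_zero m)) ?_
  · rw [← A.map_comp, ← A.map_comp, ← op_comp, ← op_comp, w]
  · rw [range_map_xiSigma_zero A hA m, range_map_xiSigma_zero A hA k, ← hφ, op_comp,
      A.map_comp]
    rfl

lemma isPullback_of_lastVertex_comp {m k : ℕ} {ψ : IntervalCat.mk m ⟶ IntervalCat.mk k}
    {φ : IntervalCat.mk (m + 1) ⟶ IntervalCat.mk (k + 1)}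
    (w : xiSigma m (m + 1) ≫ ψ = φ ≫ xiSigma k (k + 1))
    (hφ : lastVertex m ≫ φ = lastVertex k) :
    IsPullback (A.map ψ.op) (A.map (xiSigma k (k + 1)).op) (A.map (xiSigma m (m + 1)).op)
      (A.map φ.op) := by
  refine isPullback_of_injective_of_preimage_range_subset ?_
    (map_op_injective_of_comp_eq_id A (xiFace_last_comp_xiSigma_last k))
    (map_op_injective_of_comp_eq_id A (xiFace_last_comp_xiSigma_last m)) ?_
  · rw [← A.map_comp, ← A.map_comp, ← op_comp, ← op_comp, w]
  · rw [range_map_xiSigma_last A hA m, range_map_xiSigma_last A hA k, ← hφ, op_comp,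
      A.map_comp]
    rfl

end Flanked

/-- "bonus pullbacks" for flanked presheaves on `Ξ`.  Let `A` be a flanked
presheaf on `Ξ` (paper degree indexing: `A_n := A(⟨n+1⟩)`, `n ≥ -1`).  Then for all `n ≥ 0`
the following squares are pullbacks:
(i)  top `d_i : A_n → A_{n-1}`, bottom `d_{i+1} : A_{n+1} → A_n`, verticals `s_{⊥-1}`,
     for `0 ≤ i ≤ n`;
(ii) top `s_j : A_{n-1} → A_n`, bottom `s_{j+1} : A_n → A_{n+1}`, verticals `s_{⊥-1}`,
     for `-1 ≤ j ≤ n` (we encode the index as `jj = j + 1`, `0 ≤ jj ≤ n+1`, so that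
     `s_j = A(xiSigma n jj)` includes `s_{-1} = s_{⊥-1}` at `jj = 0` and `s_{⊤+1}` at
     `jj = n+1`);
(iii) top `d_i : A_n → A_{n-1}`, bottom `d_i : A_{n+1} → A_n`, verticals `s_{⊤+1}`,
     for `0 ≤ i ≤ n`;
(iv) top `s_j : A_{n-1} → A_n`, bottom `s_j : A_n → A_{n+1}`, verticals `s_{⊤+1}`,
     for `-1 ≤ j ≤ n` (encoded as in (ii)). -/
theorem flanked_bonus_pullbacks (A : IntervalCatᵒᵖ ⥤ Type) (hA : Flanked A) (n : ℕ) :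
    (∀ i ≤ n,
      IsPullback (A.map (xiFace n i).op) (A.map (xiSigma (n + 1) 0).op)
        (A.map (xiSigma n 0).op) (A.map (xiFace (n + 1) (i + 1)).op)) ∧
    (∀ jj ≤ n + 1,
      IsPullback (A.map (xiSigma n jj).op) (A.map (xiSigma n 0).op)
        (A.map (xiSigma (n + 1) 0).op) (A.map (xiSigma (n + 1) (jj + 1)).op)) ∧
    (∀ i ≤ n,
      IsPullback (A.map (xiFace n i).op) (A.map (xiSigma (n + 1) (n + 2)).op)
        (A.map (xiSigma n (n + 1)).op) (A.map (xiFace (n + 1) i).op)) ∧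
    (∀ jj ≤ n + 1,
      IsPullback (A.map (xiSigma n jj).op) (A.map (xiSigma n (n + 1)).op)
        (A.map (xiSigma (n + 1) (n + 2)).op) (A.map (xiSigma (n + 1) jj).op)) :=
  ⟨fun _ _ => isPullback_of_firstVertex_comp A hA xiSigma_zero_comp_xiFace
      firstVertex_comp_xiFace,
    fun _ _ => isPullback_of_firstVertex_comp A hA xiSigma_zero_comp_xiSigma
      firstVertex_comp_xiSigma,
    fun _ hi => isPullback_of_lastVertex_comp A hA (xiSigma_last_comp_xiFace hi)
      (lastVertex_comp_xiFace hi),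
    fun _ hjj => isPullback_of_lastVertex_comp A hA xiSigma_last_comp_xiSigma
      (lastVertex_comp_xiSigma hjj)⟩

end DS3
end
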